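/- Let ψ(t) = 1/log(e/t) on (0,1), and let C denote the Cesàro operator (Cw)(s) = (1/s)∫_0^s w(u)du. Then for every w ∈ Λ_ψ(0,1), ∫_0^1 [sup_{0<s<t} ψ(s)² (Cμ(w))(s)] dt/t ≤ 3 ‖w‖_{Λ_ψ}, where ‖w‖_{Λ_ψ} = ∫_0^1 μ(s,w)dψ(s). -/

import Mathlib

/-
Since `μ(w)` is nonincreasing, the layer-cake formula writes it as `∫_0^∞ χ_{(0,a(λ))} dλ`,
where `a(λ)` is the right end of the superlevel set `{μ(w) > λ}`. After Tonelli, both sides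
become integrals over `λ`, so it suffices to treat `w = χ_{(0,a)}`, for which
`Cμ(w)(s) = min(a,s)/s`. As `ψ` increases while `ψ(s)²/s` decreases on `(0,1/e]` and increases
on `[1/e,1)`, the supremum over `s < t` is at most `ψ(min(a,t))² + (a/t)·[t > max(a,1/e)]`.
Integrating against `dt/t` gives `2ψ(a) - ψ(a)² + min(1, ea) - a`, which is at most
`3ψ(a) = 3∫_0^a ψ(t)² dt/t` because `ψ(a) ≥ 1/2` when `a ≥ 1/e`, while `ψ(a) ≤ 1/2` and
`ea ≤ 4ψ(a)²` when `a ≤ 1/e`.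
-/

open MeasureTheory Set

/-- Lebesgue measure on `(0,1)`. -/
noncomputable def nu : Measure ℝ := volume.restrict (Set.Ioo 0 1)

/-- Decreasing rearrangement of a function on `(0,1)`. -/
noncomputable def mu (f : ℝ → ℝ) (t : ℝ) : ℝ :=
  sInf {s : ℝ | 0 ≤ s ∧ nu {u | s < |f u|} ≤ ENNReal.ofReal t}

/-- `ψ(t) = 1/log(e/t)`. -/
noncomputable def psi (t : ℝ) : ℝ := 1 / Real.log (Real.exp 1 / t)

/-- The Cesàro operator `(Cw)(s) = (1/s) ∫_0^s w(u) du`. -/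
noncomputable def Ces (w : ℝ → ℝ) (s : ℝ) : ℝ := (∫ u in Set.Ioc (0:ℝ) s, w u) / s

open Filter Topology Real

lemma exp_one_inv_lt_exp_one : (exp 1)⁻¹ < exp 1 :=
  (inv_lt_one_of_one_lt₀ (one_lt_exp_iff.2 one_pos)).trans (one_lt_exp_iff.2 one_pos)

lemma psi_zero : psi 0 = 0 := by simp [psi]

lemma psi_eq_inv {t : ℝ} (ht : 0 < t) : psi t = (1 - log t)⁻¹ := by
  rw [psi, log_div (exp_ne_zero 1) ht.ne', log_exp, one_div]

lemma psi_pos {t : ℝ} (ht0 : 0 < t) (ht : t < exp 1) : 0 < psi t := by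
  rw [psi_eq_inv ht0, inv_pos, sub_pos, ← log_exp 1]
  exact log_lt_log ht0 ht

lemma psi_nonneg {t : ℝ} (ht0 : 0 ≤ t) (ht : t < exp 1) : 0 ≤ psi t := by
  rcases ht0.eq_or_lt with rfl | ht0
  · rw [psi_zero]
  · exact (psi_pos ht0 ht).le

lemma psi_le_one {t : ℝ} (ht0 : 0 < t) (ht : t ≤ 1) : psi t ≤ 1 := by
  rw [psi_eq_inv ht0]
  exact inv_le_one_of_one_le₀ (by linarith [log_nonpos ht0.le ht])

lemma psi_exp_one_inv : psi (exp 1)⁻¹ = 1 / 2 := by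
  rw [psi_eq_inv (inv_pos.2 (exp_pos 1)), Real.log_inv, log_exp]
  norm_num

lemma psi_mul_one_sub_log {t : ℝ} (ht0 : 0 < t) (ht : t < exp 1) :
    psi t * (1 - log t) = 1 := by
  rw [psi_eq_inv ht0, inv_mul_cancel₀]
  exact (inv_pos.1 (psi_eq_inv ht0 ▸ psi_pos ht0 ht)).ne'

lemma hasDerivAt_psi {t : ℝ} (ht0 : 0 < t) (ht : t < exp 1) :
    HasDerivAt psi (psi t ^ 2 / t) t := by
  have hpos : 0 < 1 - log t := by simpa [psi_eq_inv ht0] using psi_pos ht0 ht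
  have hinv := ((hasDerivAt_log ht0.ne').const_sub 1).inv hpos.ne'
  refine (hinv.congr_of_eventuallyEq ?_).congr_deriv ?_
  · filter_upwards [Ioi_mem_nhds ht0] with x hx using psi_eq_inv hx
  · rw [psi_eq_inv ht0]
    field_simp

lemma continuousWithinAt_psi_zero : ContinuousWithinAt psi (Ici 0) 0 := by
  rw [← continuousWithinAt_Ioi_iff_Ici, ContinuousWithinAt, psi_zero]
  show Tendsto (fun t => psi t) _ _
  have h := (tendsto_log_atTop.comp ((tendsto_inv_nhdsGT_zero (𝕜 := ℝ)).const_mul_atTop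
    (exp_pos 1))).const_div_atTop 1
  simpa [psi, div_eq_mul_inv] using h

lemma continuousOn_psi : ContinuousOn psi (Ico 0 (exp 1)) := by
  intro t ht
  rcases ht.1.eq_or_lt with rfl | ht0
  · exact continuousWithinAt_psi_zero.mono Ico_subset_Ici_self
  · exact (hasDerivAt_psi ht0 ht.2).continuousAt.continuousWithinAt

@[fun_prop]
lemma measurable_psi : Measurable psi := by
  unfold psi
  fun_prop

lemma monotoneOn_psi : MonotoneOn psi (Ico 0 (exp 1)) := by
  refine monotoneOn_of_hasDerivWithinAt_nonneg (f' := fun t => psi t ^ 2 / t) (convex_Ico 0 _)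
    continuousOn_psi (fun t ht => ?_) (fun t ht => ?_) <;> rw [interior_Ico] at ht
  · exact (hasDerivAt_psi ht.1 ht.2).hasDerivWithinAt
  · exact div_nonneg (sq_nonneg _) ht.1.le

lemma psi_le_half {s : ℝ} (hs0 : 0 ≤ s) (hs : s ≤ (exp 1)⁻¹) : psi s ≤ 1 / 2 :=
  psi_exp_one_inv ▸ monotoneOn_psi ⟨hs0, hs.trans_lt exp_one_inv_lt_exp_one⟩
    ⟨(inv_pos.2 (exp_pos 1)).le, exp_one_inv_lt_exp_one⟩ hs

lemma half_le_psi {s : ℝ} (hs : (exp 1)⁻¹ ≤ s) (hs' : s < exp 1) : 1 / 2 ≤ psi s :=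
  psi_exp_one_inv ▸ monotoneOn_psi ⟨(inv_pos.2 (exp_pos 1)).le, exp_one_inv_lt_exp_one⟩
    ⟨(inv_pos.2 (exp_pos 1)).le.trans hs, hs'⟩ hs

lemma hasDerivAt_psi_sq_div {s : ℝ} (hs0 : 0 < s) (hs : s < exp 1) :
    HasDerivAt (fun s => psi s ^ 2 / s) (psi s ^ 2 * (2 * psi s - 1) / s ^ 2) s := by
  refine (((hasDerivAt_psi hs0 hs).pow 2).div (hasDerivAt_id' s) hs0.ne').congr_deriv ?_
  simp only [Pi.pow_apply]
  field_simp
  ring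

lemma antitoneOn_psi_sq_div : AntitoneOn (fun s => psi s ^ 2 / s) (Ioc 0 (exp 1)⁻¹) := by
  have hderiv : ∀ s ∈ Ioc 0 (exp 1)⁻¹, HasDerivAt (fun s => psi s ^ 2 / s)
      (psi s ^ 2 * (2 * psi s - 1) / s ^ 2) s := fun s hs =>
    hasDerivAt_psi_sq_div hs.1 (hs.2.trans_lt exp_one_inv_lt_exp_one)
  refine antitoneOn_of_hasDerivWithinAt_nonpos (convex_Ioc 0 _)
    (f' := fun s => psi s ^ 2 * (2 * psi s - 1) / s ^ 2)
    (fun s hs => (hderiv s hs).continuousAt.continuousWithinAt)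
    (fun s hs => ?_) (fun s hs => ?_) <;> rw [interior_Ioc] at hs
  · exact (hderiv s (Ioo_subset_Ioc_self hs)).hasDerivWithinAt
  · have := psi_le_half hs.1.le hs.2.le
    exact div_nonpos_of_nonpos_of_nonneg
      (mul_nonpos_of_nonneg_of_nonpos (sq_nonneg _) (by linarith)) (sq_nonneg _)

lemma monotoneOn_psi_sq_div : MonotoneOn (fun s => psi s ^ 2 / s) (Ico (exp 1)⁻¹ (exp 1)) := by
  have hderiv : ∀ s ∈ Ico (exp 1)⁻¹ (exp 1), HasDerivAt (fun s => psi s ^ 2 / s)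
      (psi s ^ 2 * (2 * psi s - 1) / s ^ 2) s := fun s hs =>
    hasDerivAt_psi_sq_div ((inv_pos.2 (exp_pos 1)).trans_le hs.1) hs.2
  refine monotoneOn_of_hasDerivWithinAt_nonneg (convex_Ico _ _)
    (f' := fun s => psi s ^ 2 * (2 * psi s - 1) / s ^ 2)
    (fun s hs => (hderiv s hs).continuousAt.continuousWithinAt)
    (fun s hs => ?_) (fun s hs => ?_) <;> rw [interior_Ico] at hs
  · exact (hderiv s (Ioo_subset_Ico_self hs)).hasDerivWithinAt
  · have := half_le_psi hs.1.le hs.2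
    exact div_nonneg (mul_nonneg (sq_nonneg _) (by linarith)) (sq_nonneg _)

lemma exp_one_div_four_mul_le_psi_sq {a : ℝ} (ha0 : 0 < a) (ha : a ≤ (exp 1)⁻¹) :
    exp 1 / 4 * a ≤ psi a ^ 2 := by
  have h := antitoneOn_psi_sq_div ⟨ha0, ha⟩ ⟨inv_pos.2 (exp_pos 1), le_rfl⟩ ha
  simp only [psi_exp_one_inv] at h
  rw [le_div_iff₀ ha0] at h
  norm_num at h
  linarith

lemma lintegral_Ioo_ofReal_eq_sub {g g' : ℝ → ℝ} {a b : ℝ} (hab : a ≤ b)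
    (hcont : ContinuousOn g (Icc a b)) (hderiv : ∀ x ∈ Ioo a b, HasDerivAt g (g' x) x)
    (hg' : ∀ x ∈ Ioo a b, 0 ≤ g' x) :
    ∫⁻ x in Ioo a b, ENNReal.ofReal (g' x) = ENNReal.ofReal (g b - g a) := by
  have hint : IntegrableOn g' (Ioc a b) :=
    intervalIntegral.integrableOn_deriv_of_nonneg hcont hderiv hg'
  rw [← ofReal_integral_eq_lintegral_ofReal (hint.mono_set Ioo_subset_Ioc_self)
    ((ae_restrict_iff' measurableSet_Ioo).2 (ae_of_all _ hg')), ← integral_Ioc_eq_integral_Ioo,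
    ← intervalIntegral.integral_of_le hab,
    intervalIntegral.integral_eq_sub_of_hasDerivAt_of_le hab hcont hderiv
      ((intervalIntegrable_iff_integrableOn_Ioc_of_le hab).2 hint)]

lemma lintegral_psi_sq_div {a : ℝ} (ha0 : 0 ≤ a) (ha : a < exp 1) :
    ∫⁻ t in Ioo 0 a, ENNReal.ofReal (psi t ^ 2 / t) = ENNReal.ofReal (psi a) := by
  rw [lintegral_Ioo_ofReal_eq_sub ha0 (continuousOn_psi.mono (Icc_subset_Ico_right ha))
    (fun t ht => hasDerivAt_psi ht.1 (ht.2.trans ha))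
    (fun t ht => div_nonneg (sq_nonneg _) ht.1.le), psi_zero, sub_zero]

lemma lintegral_const_div {a b c : ℝ} (ha : 0 < a) (hab : a ≤ b) (hc : 0 ≤ c) :
    ∫⁻ t in Ioo a b, ENNReal.ofReal (c / t) = ENNReal.ofReal (c * (log b - log a)) := by
  rw [lintegral_Ioo_ofReal_eq_sub hab (g := fun t => c * log t)]
  · rw [mul_sub]
  · exact continuousOn_const.mul (continuousOn_log.mono fun t ht => (ha.trans_le ht.1).ne')
  · exact fun t ht => by simpa [div_eq_mul_inv] using
      (hasDerivAt_log (ha.trans ht.1).ne').const_mul c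
  · exact fun t ht => div_nonneg hc (ha.trans ht.1).le

lemma lintegral_const_div_sq {a b c : ℝ} (ha : 0 < a) (hab : a ≤ b) (hc : 0 ≤ c) :
    ∫⁻ t in Ioo a b, ENNReal.ofReal (c / t ^ 2) = ENNReal.ofReal (c / a - c / b) := by
  rw [lintegral_Ioo_ofReal_eq_sub hab (g := fun t => -(c / t))]
  · ring_nf
  · exact (continuousOn_const.div continuousOn_id fun t ht => (ha.trans_le ht.1).ne').neg
  · intro t ht
    have ht0 : t ≠ 0 := (ha.trans ht.1).ne'
    refine (((hasDerivAt_inv ht0).const_mul c).neg.congr_of_eventuallyEq ?_).congr_deriv ?_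
    · filter_upwards with x using by simp [div_eq_mul_inv]
    · field_simp
  · exact fun t ht => div_nonneg hc (sq_nonneg t)

noncomputable def cesaroBound (a t : ℝ) : ℝ :=
  psi (min a t) ^ 2 + if max a (exp 1)⁻¹ < t then a / t else 0

lemma measurable_cesaroBound : Measurable fun p : ℝ × ℝ => cesaroBound p.1 p.2 := by
  unfold cesaroBound
  exact (by fun_prop : Measurable _).add
    (Measurable.ite (measurableSet_lt (by fun_prop) (by fun_prop)) (by fun_prop) (by fun_prop))

lemma psi_sq_div_mul_min_le_cesaroBound {a s t : ℝ} (ha0 : 0 ≤ a) (ha1 : a ≤ 1) (hs : 0 < s)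
    (hst : s < t) (ht : t ≤ 1) : psi s ^ 2 / s * min a s ≤ cesaroBound a t := by
  have he : 1 < exp 1 := one_lt_exp_iff.2 one_pos
  have ht0 : 0 < t := hs.trans hst
  have hextra : 0 ≤ if max a (exp 1)⁻¹ < t then a / t else 0 := by
    split_ifs <;> positivity
  rcases le_or_gt s a with hsa | has
  · rw [min_eq_right hsa, div_mul_cancel₀ _ hs.ne']
    have hmono : psi s ≤ psi (min a t) := monotoneOn_psi ⟨hs.le, by linarith⟩
      ⟨le_min ha0 ht0.le, (min_le_left a t).trans_lt (by linarith)⟩ (le_min hsa hst.le)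
    exact le_add_of_le_of_nonneg (pow_le_pow_left₀ (psi_nonneg hs.le (by linarith)) hmono 2)
      hextra
  rw [min_eq_left has.le]
  rcases le_or_gt s (exp 1)⁻¹ with hse | hse
  · rcases ha0.eq_or_lt with rfl | ha0
    · rw [mul_zero, cesaroBound]
      positivity
    have hanti := antitoneOn_psi_sq_div ⟨ha0, has.le.trans hse⟩ ⟨hs, hse⟩ has.le
    calc psi s ^ 2 / s * a ≤ psi a ^ 2 / a * a := mul_le_mul_of_nonneg_right hanti ha0.le
      _ = psi (min a t) ^ 2 := by
        rw [min_eq_left (has.trans hst).le, div_mul_cancel₀ _ ha0.ne']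
      _ ≤ cesaroBound a t := le_add_of_nonneg_right hextra
  · have hmono := monotoneOn_psi_sq_div ⟨hse.le, by linarith⟩
      ⟨(hse.trans hst).le, by linarith⟩ hst.le
    have hpsi : psi t ^ 2 ≤ 1 :=
      pow_le_one₀ (psi_nonneg ht0.le (by linarith)) (psi_le_one ht0 ht)
    rw [cesaroBound, if_pos (max_lt (has.trans hst) (hse.trans hst))]
    calc psi s ^ 2 / s * a ≤ psi t ^ 2 / t * a := mul_le_mul_of_nonneg_right hmono ha0
      _ ≤ 1 / t * a := by gcongr
      _ ≤ psi (min a t) ^ 2 + a / t := by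
        rw [one_div_mul_eq_div]
        exact le_add_of_nonneg_left (sq_nonneg _)

lemma psi_sq_mul_log_one_sub_log {a : ℝ} (ha0 : 0 < a) (ha : a < exp 1) :
    psi a ^ 2 * (log 1 - log a) = psi a - psi a ^ 2 := by
  rw [log_one]
  linear_combination psi a * psi_mul_one_sub_log ha0 ha

lemma div_max_exp_one_inv_sub_le {a : ℝ} (ha0 : 0 < a) (ha1 : a ≤ 1) :
    a / max a (exp 1)⁻¹ - a ≤ psi a + psi a ^ 2 := by
  have he4 : exp 1 < 4 := by linarith [exp_one_lt_d9]
  have he1 : 1 < exp 1 := one_lt_exp_iff.2 one_pos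
  have he := exp_pos 1
  rcases le_total a (exp 1)⁻¹ with hae | hae
  · have hpsi := psi_le_half ha0.le hae
    have hsq := exp_one_div_four_mul_le_psi_sq ha0 hae
    rw [max_eq_right hae, div_inv_eq_mul]
    have h : (a * exp 1 - a) * exp 1 ≤ 3 * psi a ^ 2 * exp 1 := by
      nlinarith [mul_le_mul_of_nonneg_right hsq (by linarith : 0 ≤ exp 1 - 1),
        mul_nonneg (sq_nonneg (psi a)) (by linarith : 0 ≤ 4 - exp 1)]
    nlinarith [le_of_mul_le_mul_right h he, psi_nonneg ha0.le (ha1.trans_lt (by linarith))]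
  · have hpsi := half_le_psi hae (by linarith)
    have hinv : 1 / 4 ≤ (exp 1)⁻¹ := by rw [one_div]; exact inv_anti₀ he he4.le
    rw [max_eq_left hae, div_self ha0.ne']
    nlinarith

lemma lintegral_psi_sq_min_div {a : ℝ} (ha0 : 0 < a) (ha1 : a ≤ 1) :
    ∫⁻ t in Ioo 0 1, ENNReal.ofReal (psi (min a t) ^ 2 / t)
      = ENNReal.ofReal (psi a) + ENNReal.ofReal (psi a - psi a ^ 2) := by
  have he : a < exp 1 := ha1.trans_lt (one_lt_exp_iff.2 one_pos)
  rw [← Ioo_union_Ico_eq_Ioo ha0 ha1, lintegral_union measurableSet_Ico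
    (Ico_disjoint_Ico_same.mono_left Ioo_subset_Ico_self),
    ← Measure.restrict_congr_set Ioo_ae_eq_Ico,
    ← lintegral_psi_sq_div ha0.le he, ← psi_sq_mul_log_one_sub_log ha0 he,
    ← lintegral_const_div ha0 ha1 (sq_nonneg _)]
  congr 1 <;> refine setLIntegral_congr_fun measurableSet_Ioo fun t ht => ?_
  · rw [min_eq_right ht.2.le]
  · rw [min_eq_left ht.1.le]

lemma lintegral_cesaroBound_div_le {a : ℝ} (ha0 : 0 ≤ a) (ha1 : a ≤ 1) :
    ∫⁻ t in Ioo 0 1, ENNReal.ofReal (cesaroBound a t / t) ≤ 3 * ENNReal.ofReal (psi a) := by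
  rcases ha0.eq_or_lt with rfl | ha0
  · have hzero : ∀ t ∈ Ioo (0:ℝ) 1, ENNReal.ofReal (cesaroBound 0 t / t) = 0 :=
      fun t ht => by simp [cesaroBound, min_eq_left ht.1.le, psi_zero]
    simp [setLIntegral_congr_fun measurableSet_Ioo hzero]
  have he : a < exp 1 := ha1.trans_lt (one_lt_exp_iff.2 one_pos)
  set c := max a (exp 1)⁻¹
  have hc0 : 0 < c := lt_max_of_lt_left ha0
  have hc1 : c ≤ 1 := max_le ha1 (inv_le_one_of_one_le₀ (one_lt_exp_iff.2 one_pos).le)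
  have hsplit : ∀ t ∈ Ioo (0:ℝ) 1, ENNReal.ofReal (cesaroBound a t / t)
      = ENNReal.ofReal (psi (min a t) ^ 2 / t)
        + (Ioi c).indicator (fun t => ENNReal.ofReal (a / t ^ 2)) t := by
    intro t ht
    have ht0 := ht.1
    rw [cesaroBound, add_div, ENNReal.ofReal_add (by positivity) (by split_ifs <;> positivity)]
    by_cases hct : c < t
    · rw [if_pos hct, indicator_of_mem (s := Ioi c) hct, div_div, ← sq t]
    · rw [if_neg hct, indicator_of_notMem (s := Ioi c) hct, zero_div, ENNReal.ofReal_zero]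
  have hsecond : ∫⁻ t in Ioo 0 1, (Ioi c).indicator (fun t => ENNReal.ofReal (a / t ^ 2)) t
      = ENNReal.ofReal (a / c - a) := by
    rw [lintegral_indicator measurableSet_Ioi, Measure.restrict_restrict measurableSet_Ioi,
      Ioi_inter_Ioo, max_eq_left hc0.le, lintegral_const_div_sq hc0 hc1 ha0.le, div_one]
  have hpsi := psi_le_one ha0 ha1
  have hpsi0 := psi_nonneg ha0.le he
  rw [setLIntegral_congr_fun measurableSet_Ioo hsplit, lintegral_add_left (by fun_prop),
    lintegral_psi_sq_min_div ha0 ha1, hsecond, ← ENNReal.ofReal_add hpsi0 (by nlinarith),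
    ← ENNReal.ofReal_add (by nlinarith) (by linarith [le_div_self ha0.le hc0 hc1]),
    ← ENNReal.ofReal_ofNat 3, ← ENNReal.ofReal_mul (by norm_num)]
  exact ENNReal.ofReal_le_ofReal (by linarith [div_max_exp_one_inv_sub_le ha0 ha1])

noncomputable def superlevelEnd (f : ℝ → ℝ) (l : ℝ) : ℝ :=
  sSup {u ∈ Ioo (0:ℝ) 1 | l < f u}

section superlevelEnd

variable {f : ℝ → ℝ}

lemma superlevelEnd_nonneg (l : ℝ) : 0 ≤ superlevelEnd f l :=
  Real.sSup_nonneg fun _ hu => hu.1.1.le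

lemma superlevelEnd_le_one (l : ℝ) : superlevelEnd f l ≤ 1 :=
  Real.sSup_le (fun _ hu => hu.1.2.le) zero_le_one

lemma bddAbove_superlevel (l : ℝ) : BddAbove {u ∈ Ioo (0:ℝ) 1 | l < f u} :=
  ⟨1, fun _ hu => hu.1.2.le⟩

lemma antitone_superlevelEnd : Antitone (superlevelEnd f) := fun _ _ hl =>
  Real.sSup_le (fun _ hu => le_csSup (bddAbove_superlevel _) ⟨hu.1, hl.trans_lt hu.2⟩)
    (superlevelEnd_nonneg _)

lemma superlevel_inter_subset_Ioc (l : ℝ) :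
    {u | l < f u} ∩ Ioo 0 1 ⊆ Ioc 0 (superlevelEnd f l) := fun _ hu =>
  ⟨hu.2.1, le_csSup (bddAbove_superlevel l) ⟨hu.2, hu.1⟩⟩

lemma Ioo_subset_superlevel (hf : AntitoneOn f (Ioo 0 1)) (l : ℝ) :
    Ioo 0 (superlevelEnd f l) ⊆ {u | l < f u} := by
  intro u hu
  have hne : {u ∈ Ioo (0:ℝ) 1 | l < f u}.Nonempty := by
    by_contra h
    rw [not_nonempty_iff_eq_empty] at h
    have := hu.1.trans hu.2
    rw [superlevelEnd, h, Real.sSup_empty] at this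
    exact lt_irrefl 0 this
  obtain ⟨v, hv, huv⟩ := exists_lt_of_lt_csSup hne hu.2
  exact hv.2.trans_le (hf ⟨hu.1, huv.trans hv.1.2⟩ hv.1 huv.le)

end superlevelEnd

lemma MeasureTheory.ofReal_integral_le_lintegral_ofReal {α : Type*} [MeasurableSpace α]
    {μ : Measure α} {f : α → ℝ} (hf : 0 ≤ᵐ[μ] f) :
    ENNReal.ofReal (∫ x, f x ∂μ) ≤ ∫⁻ x, ENNReal.ofReal (f x) ∂μ := by
  by_cases hfi : Integrable f μ
  · exact (ofReal_integral_eq_lintegral_ofReal hfi hf).le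
  · simp [integral_undef hfi]

lemma ENNReal.ofReal_sSup_le {S : Set ℝ} {x : ENNReal} (h : ∀ r ∈ S, ENNReal.ofReal r ≤ x) :
    ENNReal.ofReal (sSup S) ≤ x := by
  rcases eq_top_or_lt_top x with rfl | hx
  · exact le_top
  rw [← ENNReal.ofReal_toReal hx.ne]
  -- `Real.sSup_le` also covers empty and unbounded `S`, where `sSup S = 0`.
  exact ENNReal.ofReal_le_ofReal (Real.sSup_le
    (fun r hr => (ENNReal.ofReal_le_iff_le_toReal hx.ne).1 (h r hr)) ENNReal.toReal_nonneg)

lemma ofReal_setIntegral_Ioc_le {f : ℝ → ℝ} (hf : AntitoneOn f (Ioo 0 1))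
    (hf0 : ∀ u ∈ Ioo 0 1, 0 ≤ f u) {s : ℝ} (hs1 : s < 1) :
    ENNReal.ofReal (∫ u in Ioc 0 s, f u)
      ≤ ∫⁻ l in Ioi 0, ENNReal.ofReal (min (superlevelEnd f l) s) := by
  have hsub : Ioc 0 s ⊆ Ioo 0 1 := Ioc_subset_Ioo_right hs1
  have hnn : 0 ≤ᵐ[volume.restrict (Ioc 0 s)] f :=
    (ae_restrict_iff' measurableSet_Ioc).2 (ae_of_all _ fun u hu => hf0 u (hsub hu))
  calc ENNReal.ofReal (∫ u in Ioc 0 s, f u) ≤ ∫⁻ u in Ioc 0 s, ENNReal.ofReal (f u) :=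
        ofReal_integral_le_lintegral_ofReal hnn
    _ = ∫⁻ l in Ioi 0, volume.restrict (Ioc 0 s) {u | l < f u} :=
        lintegral_eq_lintegral_meas_lt _ hnn
          (aemeasurable_restrict_of_antitoneOn measurableSet_Ioc (hf.mono hsub))
    _ ≤ _ := lintegral_mono fun l => ?_
  rw [Measure.restrict_apply' measurableSet_Ioc]
  calc volume ({u | l < f u} ∩ Ioc 0 s) ≤ volume (Ioc 0 (min (superlevelEnd f l) s)) :=
        measure_mono fun u hu => ⟨hu.2.1,
          le_min (superlevel_inter_subset_Ioc l ⟨hu.1, hsub hu.2⟩).2 hu.2.2⟩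
    _ = ENNReal.ofReal (min (superlevelEnd f l) s) := by rw [Real.volume_Ioc, sub_zero]

lemma ofReal_psi_sq_mul_ces_le {f : ℝ → ℝ} (hf : AntitoneOn f (Ioo 0 1))
    (hf0 : ∀ u ∈ Ioo 0 1, 0 ≤ f u) {s t : ℝ} (hs : 0 < s) (hst : s < t) (ht : t ≤ 1) :
    ENNReal.ofReal (psi s ^ 2 * Ces f s)
      ≤ ∫⁻ l in Ioi 0, ENNReal.ofReal (cesaroBound (superlevelEnd f l) t) := by
  have hpsi : 0 ≤ psi s ^ 2 / s := by positivity
  rw [Ces, ← mul_div_assoc, mul_div_right_comm, ENNReal.ofReal_mul hpsi]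
  calc ENNReal.ofReal (psi s ^ 2 / s) * ENNReal.ofReal (∫ u in Ioc 0 s, f u)
      ≤ ENNReal.ofReal (psi s ^ 2 / s)
          * ∫⁻ l in Ioi 0, ENNReal.ofReal (min (superlevelEnd f l) s) :=
        by gcongr; exact ofReal_setIntegral_Ioc_le hf hf0 (hst.trans_le ht)
    _ = ∫⁻ l in Ioi 0, ENNReal.ofReal (psi s ^ 2 / s * min (superlevelEnd f l) s) := by
        rw [← lintegral_const_mul' _ _ ENNReal.ofReal_ne_top]
        simp_rw [ENNReal.ofReal_mul hpsi]
    _ ≤ _ := lintegral_mono fun l => ENNReal.ofReal_le_ofReal <|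
        psi_sq_div_mul_min_le_cesaroBound (superlevelEnd_nonneg l) (superlevelEnd_le_one l)
          hs hst ht

lemma lintegral_psi_superlevelEnd_le {f : ℝ → ℝ} (hf : AntitoneOn f (Ioo 0 1))
    (hf0 : ∀ u ∈ Ioo 0 1, 0 ≤ f u) :
    ∫⁻ l in Ioi 0, ENNReal.ofReal (psi (superlevelEnd f l))
      ≤ ∫⁻ s in Ioo 0 1, ENNReal.ofReal (f s * (psi s ^ 2 / s)) := by
  set ρ := (volume.restrict (Ioo (0:ℝ) 1)).withDensity fun s => ENNReal.ofReal (psi s ^ 2 / s)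
  have hmeas : AEMeasurable f (volume.restrict (Ioo 0 1)) :=
    aemeasurable_restrict_of_antitoneOn measurableSet_Ioo hf
  have hnn : 0 ≤ᵐ[volume.restrict (Ioo 0 1)] f :=
    (ae_restrict_iff' measurableSet_Ioo).2 (ae_of_all _ hf0)
  have hρ : ∫⁻ s in Ioo 0 1, ENNReal.ofReal (f s * (psi s ^ 2 / s))
      = ∫⁻ s, ENNReal.ofReal (f s) ∂ρ := by
    rw [lintegral_withDensity_eq_lintegral_mul₀ (by fun_prop) hmeas.ennreal_ofReal]
    refine setLIntegral_congr_fun measurableSet_Ioo fun s hs => ?_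
    rw [Pi.mul_apply, mul_comm, ENNReal.ofReal_mul' (hf0 s hs)]
  have hac : ρ ≪ volume.restrict (Ioo 0 1) := withDensity_absolutelyContinuous _ _
  rw [hρ, lintegral_eq_lintegral_meas_lt ρ (hac.ae_le hnn) (hmeas.mono_ac hac)]
  refine lintegral_mono fun l => ?_
  calc ENNReal.ofReal (psi (superlevelEnd f l))
      = ∫⁻ s in Ioo 0 (superlevelEnd f l), ENNReal.ofReal (psi s ^ 2 / s) :=
        (lintegral_psi_sq_div (superlevelEnd_nonneg l)
          ((superlevelEnd_le_one l).trans_lt (one_lt_exp_iff.2 one_pos))).symm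
    _ = ρ (Ioo 0 (superlevelEnd f l)) := by
        rw [withDensity_apply _ measurableSet_Ioo, Measure.restrict_restrict measurableSet_Ioo,
          inter_eq_left.2 (Ioo_subset_Ioo_right (superlevelEnd_le_one l))]
    _ ≤ ρ {u | l < f u} := measure_mono (Ioo_subset_superlevel hf l)

theorem lintegral_sSup_psi_sq_mul_ces_div_le {f : ℝ → ℝ} (hf : AntitoneOn f (Ioo 0 1))
    (hf0 : ∀ u ∈ Ioo 0 1, 0 ≤ f u) :
    ∫⁻ t in Ioo (0:ℝ) 1,
        ENNReal.ofReal (sSup {r : ℝ | ∃ s ∈ Ioo (0:ℝ) t, r = psi s ^ 2 * Ces f s} / t)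
      ≤ 3 * ∫⁻ s in Ioo (0:ℝ) 1, ENNReal.ofReal (f s * (psi s ^ 2 / s)) := by
  have hmeas : Measurable (Function.uncurry fun t l =>
      ENNReal.ofReal (cesaroBound (superlevelEnd f l) t / t)) :=
    ((measurable_cesaroBound.comp ((antitone_superlevelEnd.measurable.comp measurable_snd).prodMk
      measurable_fst)).div measurable_fst).ennreal_ofReal
  calc _ ≤ ∫⁻ t in Ioo 0 1, ∫⁻ l in Ioi 0,
          ENNReal.ofReal (cesaroBound (superlevelEnd f l) t / t) :=
        setLIntegral_mono' measurableSet_Ioo fun t ht => ?_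
    _ = ∫⁻ l in Ioi 0, ∫⁻ t in Ioo 0 1,
          ENNReal.ofReal (cesaroBound (superlevelEnd f l) t / t) :=
        lintegral_lintegral_swap hmeas.aemeasurable
    _ ≤ ∫⁻ l in Ioi 0, 3 * ENNReal.ofReal (psi (superlevelEnd f l)) := lintegral_mono fun l =>
        lintegral_cesaroBound_div_le (superlevelEnd_nonneg l) (superlevelEnd_le_one l)
    _ = 3 * ∫⁻ l in Ioi 0, ENNReal.ofReal (psi (superlevelEnd f l)) :=
        lintegral_const_mul' _ _ ENNReal.ofNat_ne_top
    _ ≤ _ := by grw [lintegral_psi_superlevelEnd_le hf hf0]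
  have ht0 : 0 ≤ t⁻¹ := inv_nonneg.2 ht.1.le
  simp_rw [div_eq_mul_inv, ENNReal.ofReal_mul' ht0]
  rw [lintegral_mul_const' _ _ ENNReal.ofReal_ne_top]
  gcongr
  exact ENNReal.ofReal_sSup_le fun r ⟨s, hs, hr⟩ =>
    hr ▸ ofReal_psi_sq_mul_ces_le hf hf0 hs.1 hs.2 ht.2.le

lemma mu_nonneg (w : ℝ → ℝ) (t : ℝ) : 0 ≤ mu w t :=
  Real.sInf_nonneg fun _ hx => hx.1

lemma mu_antitoneOn {w : ℝ → ℝ} (hw : Measurable w) : AntitoneOn (mu w) (Ioi 0) := by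
  intro s hs t _ hst
  have hlim : Tendsto (fun r : ℝ => nu {u | r < |w u|}) atTop (𝓝 0) := by
    have h := tendsto_measure_iInter_atTop (μ := nu) (s := fun r : ℝ => {u | r < |w u|})
      (fun _ => (measurableSet_lt measurable_const hw.abs).nullMeasurableSet)
      (fun _ _ hr _ hu => hr.trans_lt hu)
      ⟨0, measure_ne_top (volume.restrict (Ioo (0:ℝ) 1)) _⟩
    rwa [iInter_eq_empty_iff.2 fun u => ⟨|w u|, lt_irrefl (|w u|)⟩, measure_empty] at h
  obtain ⟨r, hr⟩ := eventually_atTop.1 (hlim.eventually_le_const (ENNReal.ofReal_pos.2 hs))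
  exact csInf_le_csInf ⟨0, fun _ hx => hx.1⟩
    ⟨max r 0, le_max_right _ _, hr _ (le_max_left _ _)⟩
    fun _ hx => ⟨hx.1, hx.2.trans (ENNReal.ofReal_le_ofReal hst)⟩

theorem stmt13_general (w : ℝ → ℝ) (hw : Measurable w) :
    (∫⁻ t in Set.Ioo (0:ℝ) 1,
        ENNReal.ofReal ((sSup {r : ℝ | ∃ s ∈ Set.Ioo (0:ℝ) t, r = psi s ^ 2 * Ces (mu w) s}) / t))
      ≤ 3 * ∫⁻ s in Set.Ioo (0:ℝ) 1, ENNReal.ofReal (mu w s * (psi s ^ 2 / s)) :=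
  lintegral_sSup_psi_sq_mul_ces_div_le ((mu_antitoneOn hw).mono Ioo_subset_Ioi_self)
    fun u _ => mu_nonneg w u

/-- For `w ∈ Λ_ψ(0,1)`:
`∫_0^1 [sup_{0<s<t} ψ(s)² (Cμ(w))(s)] dt/t ≤ 3 ‖w‖_{Λ_ψ}`, where
`‖w‖_{Λ_ψ} = ∫_0^1 μ(s,w) dψ(s) = ∫_0^1 μ(s,w) ψ(s)²/s ds`. -/
theorem stmt13 (w : ℝ → ℝ) (hw : Measurable w)
    (hmem : IntegrableOn (fun s => mu w s * (psi s ^ 2 / s)) (Set.Ioo 0 1)) :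
    (∫⁻ t in Set.Ioo (0:ℝ) 1,
        ENNReal.ofReal ((sSup {r : ℝ | ∃ s ∈ Set.Ioo (0:ℝ) t, r = psi s ^ 2 * Ces (mu w) s}) / t))
      ≤ 3 * ∫⁻ s in Set.Ioo (0:ℝ) 1, ENNReal.ofReal (mu w s * (psi s ^ 2 / s)) :=
  stmt13_general w hw
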